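/- arXiv:1808.10557 — 7 statements merged into one kernel-verified Lean document; each statement's English description precedes it below -/
import Mathlib

section
/- Let A be a positive semidefinite n×n complex matrix, and B a Hermitian n×n matrix with −A ≤ B ≤ A. Then det|B| ≤ det A, where |B| = (B*B)^{1/2}. -/
open ComplexOrder

/-!
If `A` is invertible, conjugating by `S = A^{-1/2}` turns `-A ≤ B ≤ A` into `-1 ≤ M ≤ 1` for
`M = S B S`; the eigenvalues of `M` then lie in `[-1, 1]`, and `|det B| = det A · |det M| ≤ det A`.
If `A` is singular, take `v ≠ 0` with `A v = 0`: then `v* (A - B) v = -v* B v` and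
`v* (A + B) v = v* B v` are both nonnegative, so `v* (A - B) v = 0`, which for the positive
semidefinite `A - B` forces `(A - B) v = 0`. Hence `B v = 0` and `det B = 0`.
-/

namespace Matrix

open scoped MatrixOrder

variable {𝕜 n : Type*} [RCLike 𝕜] [Fintype n]

lemma mulVec_eq_zero_of_neg_le_of_le {A B : Matrix n n 𝕜} (h₁ : -A ≤ B) (h₂ : B ≤ A)
    {v : n → 𝕜} (hv : A *ᵥ v = 0) : B *ᵥ v = 0 := by
  have hq₁ := (le_iff.mp h₁).dotProduct_mulVec_nonneg v
  have hq₂ := (le_iff.mp h₂).dotProduct_mulVec_nonneg v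
  simp only [sub_mulVec, neg_mulVec, hv, neg_zero, sub_zero, zero_sub, dotProduct_neg] at hq₁ hq₂
  have hq : star v ⬝ᵥ (A - B) *ᵥ v = 0 := by
    simpa [sub_mulVec, hv] using le_antisymm (neg_nonneg.mp hq₂) hq₁
  simpa [sub_mulVec, hv] using (le_iff.mp h₂).dotProduct_mulVec_zero_iff v |>.mp hq

variable [DecidableEq n]

lemma IsHermitian.norm_det_le_one {M : Matrix n n 𝕜} (hM : M.IsHermitian) (h₁ : -1 ≤ M)
    (h₂ : M ≤ 1) : ‖M.det‖ ≤ 1 := by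
  have hspec : ∀ x ∈ spectrum ℝ M, |x| ≤ 1 := fun x hx ↦ abs_le.mpr
    ⟨(algebraMap_le_iff_le_spectrum (r := -1) hM.isSelfAdjoint).mp (by simpa using h₁) x hx,
      (le_algebraMap_iff_spectrum_le (r := 1) hM.isSelfAdjoint).mp (by simpa using h₂) x hx⟩
  rw [hM.det_eq_prod_eigenvalues, norm_prod]
  refine Finset.prod_le_one (fun _ _ ↦ norm_nonneg _) fun i _ ↦ ?_
  simpa using hspec _ (hM.eigenvalues_mem_spectrum_real i)

lemma PosDef.exists_isHermitian_mul_mul_self_eq_one {A : Matrix n n 𝕜} (hA : A.PosDef) :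
    ∃ S : Matrix n n 𝕜, S.IsHermitian ∧ S * A * S = 1 := by
  set C := CFC.sqrt A
  have hC : IsUnit C.det :=
    (isUnit_iff_isUnit_det C).mp ((CFC.isUnit_sqrt_iff A hA.posSemidef.nonneg).mpr hA.isUnit)
  have hCC : C * C = A := CFC.sqrt_mul_sqrt_self A hA.posSemidef.nonneg
  refine ⟨C⁻¹, (nonneg_iff_posSemidef.mp (CFC.sqrt_nonneg A)).isHermitian.inv, ?_⟩
  rw [← hCC, ← mul_assoc, nonsing_inv_mul C hC, one_mul, mul_nonsing_inv C hC]

lemma PosDef.norm_det_le_of_neg_le_of_le {A B : Matrix n n 𝕜} (hA : A.PosDef)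
    (hB : B.IsHermitian) (h₁ : -A ≤ B) (h₂ : B ≤ A) : ‖B.det‖ ≤ ‖A.det‖ := by
  obtain ⟨S, hS, hSAS⟩ := hA.exists_isHermitian_mul_mul_self_eq_one
  set M := S * B * S
  have hM : M.IsHermitian := by
    simpa only [M, hS.eq] using isHermitian_conjTranspose_mul_mul S hB
  have hM₁ : -1 ≤ M := by simpa [hSAS] using hS.isSelfAdjoint.conjugate_le_conjugate h₁
  have hM₂ : M ≤ 1 := by simpa [hSAS] using hS.isSelfAdjoint.conjugate_le_conjugate h₂
  have hdet : A.det * M.det = B.det :=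
    calc A.det * M.det = (S * A * S).det * B.det := by simp only [M, det_mul]; ring
      _ = B.det := by rw [hSAS, det_one, one_mul]
  calc ‖B.det‖ = ‖A.det‖ * ‖M.det‖ := by rw [← hdet, norm_mul]
    _ ≤ ‖A.det‖ := mul_le_of_le_one_right (norm_nonneg _) (hM.norm_det_le_one hM₁ hM₂)

lemma PosSemidef.norm_det_le_of_neg_le_of_le {A B : Matrix n n 𝕜} (hA : A.PosSemidef)
    (hB : B.IsHermitian) (h₁ : -A ≤ B) (h₂ : B ≤ A) : ‖B.det‖ ≤ ‖A.det‖ := by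
  by_cases hdet : A.det = 0
  · obtain ⟨v, hv₀, hv⟩ := exists_mulVec_eq_zero_iff.mpr hdet
    rw [exists_mulVec_eq_zero_iff.mp ⟨v, hv₀, mulVec_eq_zero_of_neg_le_of_le h₁ h₂ hv⟩, norm_zero]
    exact norm_nonneg _
  · exact (hA.posDef_iff_det_ne_zero.mpr hdet).norm_det_le_of_neg_le_of_le hB h₁ h₂

end Matrix

/-- Fuglede–Kadison determinant inequality (matrix version): if `−A ≤ B ≤ A` with
`A ⪰ 0` and `B` Hermitian, then `det |B| = |det B| ≤ det A`. -/
theorem stmt_4 {n : ℕ} (A B : Matrix (Fin n) (Fin n) ℂ)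
    (hA : A.PosSemidef) (hB : B.IsHermitian)
    (h1 : (A - B).PosSemidef) (h2 : (A + B).PosSemidef) :
    ‖B.det‖ ≤ A.det.re := by
  open scoped MatrixOrder in
  have hle : ‖B.det‖ ≤ ‖A.det‖ :=
    hA.norm_det_le_of_neg_le_of_le hB (by rwa [Matrix.le_iff, sub_neg_eq_add, add_comm]) h1
  rwa [← Complex.re_eq_norm.mpr hA.det_nonneg] at hle
end

section
/- Let A be a positive semidefinite n×n complex matrix and B a Hermitian n×n matrix with −A ≤ B ≤ A. Then B is logarithmically submajorised by A: for every 1 ≤ k ≤ n, the product of the k largest singular values of B is at most the product of the k largest singular values of A. -/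
/-!
Let `V` be the isometry onto the span of the eigenvectors of `B` indexed by `s`. Compression by `V`
preserves `-A ≤ B ≤ A` and makes `B` diagonal, so `∏ i ∈ s, |λᵢ(B)| = |det (Vᴴ B V)|`, which is at
most `det (Vᴴ A V)`: for invertible `A = Rᴴ R` the congruence by `R⁻¹` reduces this to
`-1 ≤ C ≤ 1 ⇒ |det C| ≤ 1`, and for singular `A` a kernel vector of `A` is one of `B`.

It remains to bound `det (Vᴴ A V)` by the product of the `k` largest eigenvalues of `A` (Ky Fan).
Diagonalise `A` and raise its eigenvalues below a level `c > 0` up to `c`: the result is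
`c • (1 + H)` with `H = Gᴴ G ⪰ 0`, and since `V Vᴴ ≤ 1`, the Weinstein–Aronszajn identity gives
`det (1 + Vᴴ H V) = det (1 + G V Vᴴ Gᴴ) ≤ det (1 + G Gᴴ) = det (1 + H)`. For `c` slightly above a
value separating the `k` largest eigenvalues from the others, the resulting bound is the product
of `max λᵢ c` over the `k` largest, which tends to their product.
-/

open ComplexOrder Matrix
open scoped MatrixOrder

theorem exists_finset_card_eq_separated {ι : Type*} [Fintype ι] [DecidableEq ι] {d : ι → ℝ}
    (hd : ∀ i, 0 ≤ d i) {k : ℕ} (hk : k ≤ Fintype.card ι) :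
    ∃ (t : Finset ι) (c : ℝ), t.card = k ∧ 0 ≤ c ∧ (∀ i ∈ t, c ≤ d i) ∧ ∀ j ∉ t, d j ≤ c := by
  induction k with
  | zero =>
    exact ⟨∅, ∑ i, d i, rfl, Finset.sum_nonneg fun i _ => hd i, by simp,
      fun j _ => Finset.single_le_sum (fun i _ => hd i) (Finset.mem_univ j)⟩
  | succ k ih =>
    obtain ⟨t, c, htk, -, hct, htc⟩ := ih (by omega)
    obtain ⟨j₀, hj₀, hmax⟩ := tᶜ.exists_max_image d <| by
      rw [← Finset.card_pos, Finset.card_compl]; omega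
    rw [Finset.mem_compl] at hj₀
    refine ⟨insert j₀ t, d j₀, by rw [Finset.card_insert_of_notMem hj₀, htk], hd j₀, ?_, ?_⟩
    · intro i hi
      rcases Finset.mem_insert.1 hi with rfl | hi
      · exact le_rfl
      · exact (htc j₀ hj₀).trans (hct i hi)
    · exact fun j hj => hmax j (Finset.mem_compl.2 fun h => hj (Finset.mem_insert_of_mem h))

namespace Matrix

theorem posSemidef_diagonal_ofReal {n : Type*} [DecidableEq n] {d : n → ℝ} (hd : ∀ i, 0 ≤ d i) :
    (diagonal fun i => (d i : ℂ)).PosSemidef :=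
  posSemidef_diagonal_iff.2 fun i => Complex.zero_le_real.2 (hd i)

theorem card_le_of_conjTranspose_mul_self_eq_one {n κ : Type*} [Fintype n] [Fintype κ]
    [DecidableEq κ] {M : Matrix n κ ℂ} (hM : Mᴴ * M = 1) : Fintype.card κ ≤ Fintype.card n :=
  calc Fintype.card κ = (Mᴴ * M).rank := by rw [hM, rank_one]
    _ ≤ M.rank := rank_mul_le_right _ _
    _ ≤ Fintype.card n := rank_le_card_height M

theorem conjTranspose_submatrix_mul_mul_submatrix {n m κ α : Type*} [Fintype n] [Fintype m]
    [Semiring α] [StarRing α] (U : Matrix n m α) (X : Matrix n n α) (e : κ → m) :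
    (U.submatrix id e)ᴴ * X * U.submatrix id e = (Uᴴ * X * U).submatrix e e := by
  rw [submatrix_mul _ _ _ id _ Function.bijective_id,
    submatrix_mul _ _ _ id _ Function.bijective_id, conjTranspose_submatrix]
  rfl

variable {n κ : Type*} [Fintype n] [DecidableEq n] [Fintype κ] [DecidableEq κ]

theorem IsHermitian.abs_eigenvalues_le_one {C : Matrix n n ℂ} (hC : C.IsHermitian)
    (h₁ : (1 - C).PosSemidef) (h₂ : (1 + C).PosSemidef) (i : n) : |hC.eigenvalues i| ≤ 1 := by
  have hspec := hC.eigenvalues_mem_spectrum_real i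
  have hle := (le_algebraMap_iff_spectrum_le (r := (1 : ℝ)) hC.isSelfAdjoint).1
    (by simpa [Matrix.le_iff] using h₁) _ hspec
  have hge := (algebraMap_le_iff_le_spectrum (r := (-1 : ℝ)) hC.isSelfAdjoint).1
    (by simpa [Matrix.le_iff, sub_eq_add_neg, add_comm] using h₂) _ hspec
  exact abs_le.2 ⟨hge, hle⟩

theorem IsHermitian.norm_det_le_one_s5 {C : Matrix n n ℂ} (hC : C.IsHermitian)
    (h₁ : (1 - C).PosSemidef) (h₂ : (1 + C).PosSemidef) : ‖C.det‖ ≤ 1 := by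
  rw [hC.det_eq_prod_eigenvalues, norm_prod]
  exact Finset.prod_le_one (fun _ _ => norm_nonneg _) fun i _ => by
    simpa using hC.abs_eigenvalues_le_one h₁ h₂ i

theorem det_eq_zero_of_posSemidef_sub_of_posSemidef_add {A B : Matrix n n ℂ} (hA : A.det = 0)
    (h₁ : (A - B).PosSemidef) (h₂ : (A + B).PosSemidef) : B.det = 0 := by
  obtain ⟨x, hx, hAx⟩ := exists_mulVec_eq_zero_iff.mpr hA
  have hq₁ := h₁.dotProduct_mulVec_nonneg x
  have hq₂ := h₂.dotProduct_mulVec_nonneg x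
  simp only [sub_mulVec, add_mulVec, hAx, zero_sub, zero_add, dotProduct_neg, neg_nonneg]
    at hq₁ hq₂
  have hBx : (A - B) *ᵥ x = 0 := by
    rw [← h₁.dotProduct_mulVec_zero_iff, sub_mulVec, hAx, zero_sub, dotProduct_neg,
      le_antisymm hq₁ hq₂, neg_zero]
  rw [sub_mulVec, hAx, zero_sub, neg_eq_zero] at hBx
  exact exists_mulVec_eq_zero_iff.mp ⟨x, hx, hBx⟩

theorem norm_det_le_of_posSemidef_sub_of_posSemidef_add {A B : Matrix n n ℂ}
    (hA : A.PosSemidef) (h₁ : (A - B).PosSemidef) (h₂ : (A + B).PosSemidef) :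
    ‖B.det‖ ≤ ‖A.det‖ := by
  by_cases hdet : A.det = 0
  · simp [det_eq_zero_of_posSemidef_sub_of_posSemidef_add hdet h₁ h₂, hdet]
  obtain ⟨R, rfl⟩ := CStarAlgebra.nonneg_iff_eq_star_mul_self.mp hA.nonneg
  have hR : IsUnit R := by
    rw [isUnit_iff_isUnit_det, isUnit_iff_ne_zero]
    exact fun h => hdet (by simp [h])
  obtain ⟨C, hB⟩ : ∃ C, B = star R * C * R := by
    have hRR : R⁻¹ * R = 1 := nonsing_inv_mul R ((isUnit_iff_isUnit_det R).mp hR)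
    refine ⟨star R⁻¹ * B * R⁻¹, ?_⟩
    simp only [← mul_assoc, ← star_mul, hRR, star_one, one_mul]
    simp [mul_assoc, hRR]
  have hsub : star R * R - B = star R * (1 - C) * R := by
    rw [hB]; noncomm_ring
  have hadd : star R * R + B = star R * (1 + C) * R := by
    rw [hB]; noncomm_ring
  rw [hsub, hR.posSemidef_star_left_conjugate_iff] at h₁
  rw [hadd, hR.posSemidef_star_left_conjugate_iff] at h₂
  have hC : C.IsHermitian := by simpa using (h₁.isHermitian.sub isHermitian_one).neg
  rw [hB, det_mul, det_mul, det_mul, norm_mul, norm_mul, norm_mul]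
  calc ‖(star R).det‖ * ‖C.det‖ * ‖R.det‖ ≤ ‖(star R).det‖ * 1 * ‖R.det‖ := by
        gcongr; exact hC.norm_det_le_one_s5 h₁ h₂
    _ = ‖(star R).det‖ * ‖R.det‖ := by rw [mul_one]

theorem PosSemidef.norm_det_le_of_posSemidef_sub {P Q : Matrix n n ℂ} (hP : P.PosSemidef)
    (hPQ : (Q - P).PosSemidef) : ‖P.det‖ ≤ ‖Q.det‖ := by
  have hQ : Q.PosSemidef := by simpa using hPQ.add hP
  refine norm_det_le_of_posSemidef_sub_of_posSemidef_add hQ hPQ ?_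
  simpa [add_assoc] using hPQ.add (hP.add hP)

theorem posSemidef_one_sub_mul_conjTranspose {M : Matrix n κ ℂ} (hM : Mᴴ * M = 1) :
    (1 - M * Mᴴ).PosSemidef := by
  -- `1 - M Mᴴ` is a Hermitian idempotent, hence the Gram matrix of itself.
  have h : (1 - M * Mᴴ)ᴴ * (1 - M * Mᴴ) = 1 - M * Mᴴ := by
    have hMM : M * Mᴴ * (M * Mᴴ) = M * Mᴴ := by
      rw [Matrix.mul_assoc, ← Matrix.mul_assoc Mᴴ, hM, Matrix.one_mul]
    simp only [conjTranspose_sub, conjTranspose_one, conjTranspose_mul,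
      conjTranspose_conjTranspose, sub_mul, mul_sub, one_mul, mul_one, hMM]
    abel
  exact h ▸ posSemidef_conjTranspose_mul_self _

theorem norm_det_one_add_conj_le {H : Matrix n n ℂ} (hH : H.PosSemidef) {M : Matrix n κ ℂ}
    (hM : Mᴴ * M = 1) : ‖(1 + Mᴴ * H * M).det‖ ≤ ‖(1 + H).det‖ := by
  obtain ⟨G, rfl⟩ := CStarAlgebra.nonneg_iff_eq_star_mul_self.mp hH.nonneg
  have hleft : (1 + Mᴴ * (star G * G) * M).det = (1 + G * M * (G * M)ᴴ).det := by
    have h : Mᴴ * (star G * G) * M = (G * M)ᴴ * (G * M) := by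
      simp only [conjTranspose_mul, star_eq_conjTranspose, Matrix.mul_assoc]
    rw [h, det_one_add_mul_comm]
  have hright : (1 + star G * G).det = (1 + G * Gᴴ).det := by
    rw [det_one_add_mul_comm, star_eq_conjTranspose]
  rw [hleft, hright]
  refine PosSemidef.norm_det_le_of_posSemidef_sub
    (PosSemidef.one.add (posSemidef_self_mul_conjTranspose _)) ?_
  have h : 1 + G * Gᴴ - (1 + G * M * (G * M)ᴴ) = G * (1 - M * Mᴴ) * Gᴴ := by
    simp only [conjTranspose_mul, Matrix.mul_sub, Matrix.sub_mul, Matrix.mul_one,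
      Matrix.mul_assoc]
    abel
  rw [h]
  exact (posSemidef_one_sub_mul_conjTranspose hM).mul_mul_conjTranspose_same G

theorem norm_det_conj_diagonal_le_pow_mul_prod {M : Matrix n κ ℂ} (hM : Mᴴ * M = 1)
    {d : n → ℝ} (hd : ∀ i, 0 ≤ d i) {c : ℝ} (hc : 0 < c) :
    ‖(Mᴴ * diagonal (fun i => (d i : ℂ)) * M).det‖ ≤
      c ^ Fintype.card κ * ∏ i, max (d i / c) 1 := by
  set H : Matrix n n ℂ := diagonal fun i => ((max (d i / c) 1 - 1 : ℝ) : ℂ)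
  have hH : H.PosSemidef := posSemidef_diagonal_ofReal fun i => by simp
  have hraise : (c : ℂ) • (1 + H) - diagonal (fun i => (d i : ℂ)) =
      diagonal fun i => ((c * max (d i / c) 1 - d i : ℝ) : ℂ) := by
    simp only [H, ← diagonal_one, diagonal_add, ← diagonal_smul, diagonal_sub]
    congr 1; ext i; simp only [Pi.smul_apply, smul_eq_mul]; push_cast; ring
  have hle : ∀ i, 0 ≤ c * max (d i / c) 1 - d i := fun i => by
    have : d i ≤ c * max (d i / c) 1 :=
      calc d i = c * (d i / c) := by field_simp
        _ ≤ c * max (d i / c) 1 := by gcongr; exact le_max_left _ _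
    linarith
  calc ‖(Mᴴ * diagonal (fun i => (d i : ℂ)) * M).det‖
      ≤ ‖(Mᴴ * ((c : ℂ) • (1 + H)) * M).det‖ := by
        refine PosSemidef.norm_det_le_of_posSemidef_sub
          ((posSemidef_diagonal_ofReal hd).conjTranspose_mul_mul_same M) ?_
        rw [← Matrix.sub_mul, ← Matrix.mul_sub, hraise]
        exact (posSemidef_diagonal_ofReal hle).conjTranspose_mul_mul_same M
    _ = c ^ Fintype.card κ * ‖(1 + Mᴴ * H * M).det‖ := by
        rw [Matrix.mul_smul, Matrix.smul_mul, det_smul, norm_mul, norm_pow, Complex.norm_real,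
          Real.norm_of_nonneg hc.le, Matrix.mul_add, Matrix.add_mul, Matrix.mul_one, hM]
    _ ≤ c ^ Fintype.card κ * ‖(1 + H).det‖ := by
        gcongr; exact norm_det_one_add_conj_le hH hM
    _ = c ^ Fintype.card κ * ∏ i, max (d i / c) 1 := by
        simp only [H, ← diagonal_one, diagonal_add, det_diagonal, norm_prod]
        congr 1; refine Finset.prod_congr rfl fun i _ => ?_
        simp

open Filter Topology in
theorem exists_norm_det_conj_diagonal_le {M : Matrix n κ ℂ} (hM : Mᴴ * M = 1) {d : n → ℝ}
    (hd : ∀ i, 0 ≤ d i) : ∃ t : Finset n, t.card = Fintype.card κ ∧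
      ‖(Mᴴ * diagonal (fun i => (d i : ℂ)) * M).det‖ ≤ ∏ i ∈ t, d i := by
  obtain ⟨t, c, htk, hc, hct, htc⟩ :=
    exists_finset_card_eq_separated hd (card_le_of_conjTranspose_mul_self_eq_one hM)
  refine ⟨t, htk, ?_⟩
  -- At level `c + ε` the factors off `t` are `1` and those on `t` are `max (d i) (c + ε)`.
  have hbound : ∀ ε > 0,
      ‖(Mᴴ * diagonal (fun i => (d i : ℂ)) * M).det‖ ≤ ∏ i ∈ t, (d i + ε) := by
    intro ε hε
    have hcε : 0 < c + ε := by linarith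
    refine (norm_det_conj_diagonal_le_pow_mul_prod hM hd hcε).trans ?_
    rw [← Finset.prod_subset t.subset_univ fun j _ hj =>
        max_eq_right ((div_le_one hcε).2 (by linarith [htc j hj])),
      ← htk, ← Finset.prod_const, ← Finset.prod_mul_distrib]
    refine Finset.prod_le_prod (fun i _ => by positivity) fun i hi => ?_
    rw [mul_max_of_nonneg _ _ hcε.le, mul_div_cancel₀ _ hcε.ne', mul_one]
    exact max_le (by linarith) (by linarith [hct i hi])
  have hlim : Tendsto (fun ε => ∏ i ∈ t, (d i + ε)) (𝓝[>] 0) (𝓝 (∏ i ∈ t, d i)) := by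
    have hcont : Continuous fun ε : ℝ => ∏ i ∈ t, (d i + ε) := by fun_prop
    simpa using (hcont.tendsto 0).mono_left nhdsWithin_le_nhds
  exact ge_of_tendsto hlim (eventually_nhdsWithin_of_forall hbound)

theorem PosSemidef.exists_norm_det_conj_le {A : Matrix n n ℂ} (hA : A.PosSemidef)
    {V : Matrix n κ ℂ} (hV : Vᴴ * V = 1) : ∃ t : Finset n, t.card = Fintype.card κ ∧
      ‖(Vᴴ * A * V).det‖ ≤ ∏ i ∈ t, hA.1.eigenvalues i := by
  set U : Matrix n n ℂ := ↑hA.1.eigenvectorUnitary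
  have hU : U * Uᴴ = 1 := by
    simpa [star_eq_conjTranspose] using Unitary.coe_mul_star_self hA.1.eigenvectorUnitary
  have hUV : (Uᴴ * V)ᴴ * (Uᴴ * V) = 1 := by
    rw [conjTranspose_mul, conjTranspose_conjTranspose, Matrix.mul_assoc, ← Matrix.mul_assoc U,
      hU, Matrix.one_mul, hV]
  have hconj : Vᴴ * A * V =
      (Uᴴ * V)ᴴ * diagonal (fun i => (hA.1.eigenvalues i : ℂ)) * (Uᴴ * V) := by
    conv_lhs => rw [hA.1.spectral_theorem, Unitary.conjStarAlgAut_apply]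
    simp [U, star_eq_conjTranspose, conjTranspose_mul, Matrix.mul_assoc, Function.comp_def]
  rw [hconj]
  exact exists_norm_det_conj_diagonal_le hUV hA.eigenvalues_nonneg

theorem IsHermitian.exists_conj_eq_diagonal {B : Matrix n n ℂ} (hB : B.IsHermitian)
    (s : Finset n) : ∃ V : Matrix n s ℂ, Vᴴ * V = 1 ∧
      Vᴴ * B * V = diagonal fun i : s => (hB.eigenvalues i : ℂ) := by
  set U : Matrix n n ℂ := ↑hB.eigenvectorUnitary
  have hU : Uᴴ * U = 1 := by
    simpa [star_eq_conjTranspose] using Unitary.coe_star_mul_self hB.eigenvectorUnitary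
  have hUB : Uᴴ * B * U = diagonal fun i => (hB.eigenvalues i : ℂ) := by
    simpa [Unitary.conjStarAlgAut_star_apply, star_eq_conjTranspose, Function.comp_def] using
      hB.conjStarAlgAut_star_eigenvectorUnitary
  refine ⟨U.submatrix id (↑), ?_, ?_⟩
  · rw [← Matrix.mul_one (U.submatrix id _)ᴴ, conjTranspose_submatrix_mul_mul_submatrix,
      Matrix.mul_one, hU, submatrix_one _ Subtype.val_injective]
  · rw [conjTranspose_submatrix_mul_mul_submatrix, hUB,
      submatrix_diagonal _ _ Subtype.val_injective]
    rfl

end Matrix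

/-- If `−A ≤ B ≤ A` with `A ⪰ 0` and `B` Hermitian, then `B` is logarithmically
submajorised by `A`: for every set `s` of indices there is a set `t` of the same
cardinality such that the product of the corresponding singular values of `B`
(absolute values of eigenvalues) is bounded by the product of the eigenvalues
of `A` over `t`; i.e. products of `k` largest singular values compare. -/
theorem stmt_5 {n : ℕ} (A B : Matrix (Fin n) (Fin n) ℂ)
    (hA : A.PosSemidef) (hB : B.IsHermitian)
    (h1 : (A - B).PosSemidef) (h2 : (A + B).PosSemidef) :
    ∀ s : Finset (Fin n), ∃ t : Finset (Fin n), t.card = s.card ∧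
      ∏ i ∈ s, |hB.eigenvalues i| ≤ ∏ i ∈ t, hA.1.eigenvalues i := by
  intro s
  obtain ⟨V, hV, hBV⟩ := hB.exists_conj_eq_diagonal s
  obtain ⟨t, ht, hAV⟩ := hA.exists_norm_det_conj_le hV
  refine ⟨t, by simpa using ht, ?_⟩
  calc ∏ i ∈ s, |hB.eigenvalues i| = ‖(Vᴴ * B * V).det‖ := by
        rw [hBV, det_diagonal, norm_prod, ← Finset.prod_coe_sort s]
        simp
    _ ≤ ‖(Vᴴ * A * V).det‖ := by
        refine norm_det_le_of_posSemidef_sub_of_posSemidef_add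
          (hA.conjTranspose_mul_mul_same V) ?_ ?_
        · simpa [Matrix.mul_sub, Matrix.sub_mul] using h1.conjTranspose_mul_mul_same V
        · simpa [Matrix.mul_add, Matrix.add_mul] using h2.conjTranspose_mul_mul_same V
    _ ≤ ∏ i ∈ t, hA.1.eigenvalues i := hAV
end

section
/- Let X and Y be positive semidefinite n×n complex matrices. If X + Y and X − Y have the same singular values (with multiplicity), then XY = 0. -/
/-! Equal singular values give `tr((X - Y)²) = tr((X + Y)²)`, i.e. `tr(XY) = 0`. Writing
`X = A⋆A` and `Y = B⋆B`, this trace is `‖AB⋆‖²` in the Frobenius norm, so `AB⋆ = 0` and hence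
`XY = A⋆(AB⋆)B = 0`. -/

open ComplexOrder

namespace Matrix

variable {n 𝕜 : Type*} [Fintype n] [RCLike 𝕜]

theorem IsHermitian.trace_mul_self_eq_sum_sq_eigenvalues [DecidableEq n] {A : Matrix n n 𝕜}
    (hA : A.IsHermitian) : (A * A).trace = ∑ i, (hA.eigenvalues i : 𝕜) ^ 2 := by
  conv_lhs => rw [hA.spectral_theorem, ← map_mul, Unitary.conjStarAlgAut_apply, trace_mul_cycle,
    Unitary.coe_star_mul_self, one_mul, diagonal_mul_diagonal, trace_diagonal]
  simp [sq]

theorem IsHermitian.trace_mul_self_eq_of_abs_eigenvalues [DecidableEq n] {A B : Matrix n n 𝕜}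
    (hA : A.IsHermitian) (hB : B.IsHermitian) (σ : Equiv.Perm n)
    (h : ∀ i, |hA.eigenvalues i| = hB.eigenvalues (σ i)) : (A * A).trace = (B * B).trace := by
  rw [hA.trace_mul_self_eq_sum_sq_eigenvalues, hB.trace_mul_self_eq_sum_sq_eigenvalues,
    ← Equiv.sum_comp σ (fun i ↦ (hB.eigenvalues i : 𝕜) ^ 2)]
  simp only [← h, ← RCLike.ofReal_pow, sq_abs]

open scoped MatrixOrder in
theorem PosSemidef.mul_eq_zero_of_trace_mul_eq_zero {X Y : Matrix n n 𝕜}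
    (hX : X.PosSemidef) (hY : Y.PosSemidef) (h : (X * Y).trace = 0) : X * Y = 0 := by
  classical
  obtain ⟨A, rfl⟩ := CStarAlgebra.nonneg_iff_eq_star_mul_self.mp hX.nonneg
  obtain ⟨B, rfl⟩ := CStarAlgebra.nonneg_iff_eq_star_mul_self.mp hY.nonneg
  have hAB : A * star B = 0 := by
    rw [← trace_mul_conjTranspose_self_eq_zero_iff, ← h, trace_mul_comm (star A * A)]
    simp only [conjTranspose_mul, star_eq_conjTranspose, conjTranspose_conjTranspose, mul_assoc]
    rw [trace_mul_comm A]
    simp only [mul_assoc]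
  rw [show star A * A * (star B * B) = star A * (A * star B) * B by simp only [mul_assoc], hAB,
    mul_zero, zero_mul]

end Matrix

/-- If `X, Y ⪰ 0` and `X − Y` and `X + Y` have the same singular values (with
multiplicity; for the Hermitian matrix `X − Y` these are the absolute values of
its eigenvalues and for `X + Y ⪰ 0` its eigenvalues), then `X Y = 0`. -/
theorem stmt_7 {n : ℕ} (X Y : Matrix (Fin n) (Fin n) ℂ)
    (hX : X.PosSemidef) (hY : Y.PosSemidef)
    (hsub : (X - Y).IsHermitian) (hadd : (X + Y).IsHermitian)
    (heig : ∃ σ : Equiv.Perm (Fin n),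
      ∀ i, |hsub.eigenvalues i| = hadd.eigenvalues (σ i)) :
    X * Y = 0 := by
  obtain ⟨σ, hσ⟩ := heig
  have htr := hsub.trace_mul_self_eq_of_abs_eigenvalues hadd σ hσ
  have hXY : (X * Y).trace = 0 := by
    have expand_sub : (X - Y) * (X - Y) = X * X - X * Y - Y * X + Y * Y := by noncomm_ring
    have expand_add : (X + Y) * (X + Y) = X * X + X * Y + Y * X + Y * Y := by noncomm_ring
    rw [expand_sub, expand_add] at htr
    simp only [Matrix.trace_add, Matrix.trace_sub, Matrix.trace_mul_comm Y X] at htr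
    linear_combination -htr / 4
  exact hX.mul_eq_zero_of_trace_mul_eq_zero hY hXY
end

section
/- Let J : M₁ → M₂ be a Jordan *-homomorphism between C*-algebras. If x, y ∈ M₁ commute, then J(xy) = J(x)J(y) = J(y)J(x). -/
/-- A Jordan *-homomorphism between C*-algebras is multiplicative on commuting
elements: `J(xy) = J(x)J(y) = J(y)J(x)`. -/
theorem stmt_10 {M₁ M₂ : Type*}
    [NormedRing M₁] [StarRing M₁] [CStarRing M₁] [NormedAlgebra ℂ M₁]
    [StarModule ℂ M₁] [CompleteSpace M₁]
    [NormedRing M₂] [StarRing M₂] [CStarRing M₂] [NormedAlgebra ℂ M₂]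
    [StarModule ℂ M₂] [CompleteSpace M₂]
    (J : M₁ →ₗ[ℂ] M₂)
    (hstar : ∀ x : M₁, J (star x) = star (J x))
    (hsq : ∀ x : M₁, J (x ^ 2) = (J x) ^ 2)
    (x y : M₁) (hxy : Commute x y) :
    J (x * y) = J x * J y ∧ J x * J y = J y * J x := by
  -- polarized Jordan identity
  have jmul : ∀ a b : M₁, J (a * b + b * a) = J a * J b + J b * J a := by
    intro a b
    have h := hsq (a + b)
    have hsrc : (a + b) ^ 2 = a ^ 2 + (a * b + b * a) + b ^ 2 := by noncomm_ring
    rw [hsrc, map_add, map_add, hsq a, hsq b, map_add, map_add J a b] at h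
    have h2 : J (a * b) + J (b * a) = (J a + J b) ^ 2 - (J a) ^ 2 - (J b) ^ 2 := by
      rw [← h]; abel
    rw [map_add, h2]; noncomm_ring
  -- squares without pow
  have jsq : ∀ a : M₁, J (a * a) = J a * J a := by
    intro a
    have h := hsq a
    rwa [pow_two, pow_two] at h
  -- Jordan triple identity
  have jtriple : ∀ a b : M₁, J (a * b * a) = J a * J b * J a := by
    intro a b
    have h1 := jmul a (a * b + b * a)
    rw [jmul a b] at h1
    have hsrc : a * (a * b + b * a) + (a * b + b * a) * a
        = ((a * a) * b + b * (a * a)) + (a * b * a + a * b * a) := by noncomm_ring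
    rw [hsrc, map_add, jmul (a * a) b, jsq a, map_add] at h1
    have h3 : J (a * b * a) + J (a * b * a)
        = (J a * (J a * J b + J b * J a) + (J a * J b + J b * J a) * J a)
          - ((J a * J a) * J b + J b * (J a * J a)) := by
      rw [← h1]; abel
    have h4 : J (a * b * a) + J (a * b * a) = J a * J b * J a + J a * J b * J a := by
      rw [h3]; noncomm_ring
    have h5 : (2 : ℂ) • J (a * b * a) = (2 : ℂ) • (J a * J b * J a) := by
      rw [two_smul, two_smul]; exact h4
    exact smul_right_injective M₂ two_ne_zero h5
  -- polarized triple identity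
  have jtriple3 : ∀ a b c : M₁,
      J (a * b * c + c * b * a) = J a * J b * J c + J c * J b * J a := by
    intro a b c
    have h := jtriple (a + c) b
    have hsrc : (a + c) * b * (a + c)
        = a * b * a + (a * b * c + c * b * a) + c * b * c := by noncomm_ring
    rw [hsrc, map_add, map_add, jtriple a b, jtriple c b, map_add, map_add J a c] at h
    have h2 : J (a * b * c) + J (c * b * a)
        = (J a + J c) * J b * (J a + J c) - J a * J b * J a - J c * J b * J c := by
      rw [← h]; abel
    rw [map_add, h2]; noncomm_ring
  -- notation
  set p := J x with hp
  set q := J y with hq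
  set c := p * q - q * p with hc
  -- star-commutation in the source
  have hxys : star x * star y = star y * star x := by
    have h := congrArg star hxy.eq
    rw [star_mul, star_mul] at h
    exact h.symm
  -- star c expressed
  have hcstar : star c = star q * star p - star p * star q := by
    rw [hc, star_sub, star_mul, star_mul]
  -- star c commutes with p
  have hpc : p * star c = star c * p := by
    have i1 := jtriple3 x (star y) (star x)
    have i2 := jtriple3 x (star x) (star y)
    rw [hstar x, hstar y] at i1 i2
    have hsrc1 : x * star y * star x + star x * star y * x
        = x * star x * star y + star y * star x * x := by
      have h1 : x * star y * star x = x * star x * star y := by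
        rw [mul_assoc, mul_assoc, hxys]
      have h2 : star x * star y * x = star y * star x * x := by
        rw [hxys]
      rw [h1, h2]
    rw [hsrc1] at i1
    have h7 : p * star q * star p + star p * star q * p
        = p * star p * star q + star q * star p * p := by
      rw [← i1, ← i2]
    have h8 : p * star c - star c * p
        = (p * star q * star p + star p * star q * p)
          - (p * star p * star q + star q * star p * p) := by
      rw [hcstar]; noncomm_ring
    rw [h7, sub_self] at h8
    exact sub_eq_zero.mp h8
  -- star c commutes with q
  have hqc : q * star c = star c * q := by
    have i1 := jtriple3 y (star y) (star x)
    have i2 := jtriple3 y (star x) (star y)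
    rw [hstar x, hstar y] at i1 i2
    have hsrc1 : y * star y * star x + star x * star y * y
        = y * star x * star y + star y * star x * y := by
      have h1 : y * star y * star x = y * star x * star y := by
        rw [mul_assoc, mul_assoc, hxys]
      have h2 : star x * star y * y = star y * star x * y := by
        rw [hxys]
      rw [h1, h2]
    rw [hsrc1] at i1
    have h7 : q * star q * star p + star p * star q * q
        = q * star p * star q + star q * star p * q := by
      rw [← i1, ← i2]
    have h8 : q * star c - star c * q
        = (q * star q * star p + star p * star q * q)
          - (q * star p * star q + star q * star p * q) := by
      rw [hcstar]; noncomm_ring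
    rw [h7, sub_self] at h8
    exact sub_eq_zero.mp h8
  -- e1 : J(xy) + J(xy) = pq + qp
  have e1 : J (x * y) + J (x * y) = p * q + q * p := by
    have h := jmul x y
    rw [show y * x = x * y from hxy.eq.symm, map_add] at h
    exact h
  -- e3 : J(xy) * J(xy) = p q² p
  have e3 : J (x * y) * J (x * y) = p * (q * q) * p := by
    have hsrc : x * (y * y) * x = (x * y) ^ 2 := by
      have h1 : x * (y * y) * x = x * (y * (y * x)) := by noncomm_ring
      rw [h1, show y * x = x * y from hxy.eq.symm]
      noncomm_ring
    have h := hsq (x * y)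
    rw [← hsrc, jtriple x (y * y), jsq y] at h
    rw [pow_two] at h
    exact h.symm
  -- e2 : p q² p = q p² q
  have e2 : p * (q * q) * p = q * (p * p) * q := by
    have h1 : Commute x (y * y) := hxy.mul_right hxy
    have h2 : Commute y (x * x) := hxy.symm.mul_right hxy.symm
    have hc3 : Commute (x * x) (y * y) := by
      exact (hxy.mul_right hxy).mul_left (hxy.mul_right hxy)
    have hsrc2 : x * (y * y) * x = y * (x * x) * y := by
      calc x * (y * y) * x = ((y * y) * x) * x := by rw [h1.eq]
        _ = (y * y) * (x * x) := by noncomm_ring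
        _ = (x * x) * (y * y) := hc3.eq.symm
        _ = y * (x * x) * y := by rw [h2.eq]; noncomm_ring
    calc p * (q * q) * p = p * J (y * y) * p := by rw [jsq y]
      _ = J (x * (y * y) * x) := (jtriple x (y * y)).symm
      _ = J (y * (x * x) * y) := by rw [hsrc2]
      _ = q * J (x * x) * q := jtriple y (x * x)
      _ = q * (p * p) * q := by rw [jsq x]
  -- e4 : c * c = 0
  have e4 : c * c = 0 := by
    have h1 : c * c = (p * q + q * p) * (p * q + q * p)
        - (p * (q * q) * p + p * (q * q) * p)
        - (q * (p * p) * q + q * (p * p) * q) := by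
      rw [hc]; noncomm_ring
    rw [← e1] at h1
    have h2 : (J (x * y) + J (x * y)) * (J (x * y) + J (x * y))
        = J (x * y) * J (x * y) + J (x * y) * J (x * y)
          + (J (x * y) * J (x * y) + J (x * y) * J (x * y)) := by noncomm_ring
    rw [h2, e3, e2] at h1
    rw [h1]; abel
  -- c commutes with star c
  have hccstar : c * star c = star c * c := by
    have h1 : star c * (p * q) = (p * q) * star c := by
      calc star c * (p * q) = (star c * p) * q := by rw [mul_assoc]
        _ = (p * star c) * q := by rw [hpc]
        _ = p * (star c * q) := by rw [mul_assoc]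
        _ = p * (q * star c) := by rw [hqc]
        _ = (p * q) * star c := by rw [mul_assoc]
    have h2 : star c * (q * p) = (q * p) * star c := by
      calc star c * (q * p) = (star c * q) * p := by rw [mul_assoc]
        _ = (q * star c) * p := by rw [hqc]
        _ = q * (star c * p) := by rw [mul_assoc]
        _ = q * (p * star c) := by rw [hpc]
        _ = (q * p) * star c := by rw [mul_assoc]
    calc c * star c = (p * q) * star c - (q * p) * star c := by rw [hc, sub_mul]
      _ = star c * (p * q) - star c * (q * p) := by rw [h1, h2]
      _ = star c * (p * q - q * p) := by rw [mul_sub]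
      _ = star c * c := by rw [← hc]
  -- (star c * c)² = 0
  have h8 : (star c * c) * (star c * c) = 0 := by
    calc (star c * c) * (star c * c) = star c * (c * star c) * c := by noncomm_ring
      _ = star c * (star c * c) * c := by rw [hccstar]
      _ = (star c * star c) * (c * c) := by noncomm_ring
      _ = 0 := by rw [e4, mul_zero]
  -- star c * c = 0 by the C*-identity
  have h9 : star c * c = 0 := by
    have hsa : star (star c * c) = star c * c := by
      rw [star_mul, star_star]
    have hn : ‖star c * c‖ * ‖star c * c‖ = 0 := by
      have h := CStarRing.norm_star_mul_self (x := star c * c)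
      rw [hsa, h8, norm_zero] at h
      exact h.symm
    have : ‖star c * c‖ = 0 := mul_self_eq_zero.mp hn
    exact norm_eq_zero.mp this
  -- c = 0
  have h10 : c = 0 := by
    have hn : ‖c‖ * ‖c‖ = 0 := by
      have h := CStarRing.norm_star_mul_self (x := c)
      rw [h9, norm_zero] at h
      exact h.symm
    exact norm_eq_zero.mp (mul_self_eq_zero.mp hn)
  -- conclude
  have hpq : p * q = q * p := by
    have h := h10
    rw [hc] at h
    exact sub_eq_zero.mp h
  have hJxy : J (x * y) = p * q := by
    have h := e1
    rw [← hpq] at h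
    have h2 : (2 : ℂ) • J (x * y) = (2 : ℂ) • (p * q) := by
      rw [two_smul, two_smul]; exact h
    exact smul_right_injective M₂ two_ne_zero h2
  exact ⟨hJxy, hpq⟩
end

section
/- Let J : M₁ → M₂ be a normal Jordan *-monomorphism between von Neumann algebras, and let p be a central projection in M₁ such that J is a *-homomorphism on pM₁p and a *-anti-homomorphism on (1−p)M₁(1−p). Then for every x ∈ M₁, |J(x)| = J(p|x| + (1−p)|x*|). -/
/-!
Write `q = 1 - p`. The Jordan identity `J (a * b + b * a) = J a * J b + J b * J a` makes the
idempotents `J p` and `J q` anticommute, hence orthogonal; since `J` is multiplicative on `pM`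
and anti-multiplicative on `qM`, this gives `J x * J y = J (p * (x * y) + q * (y * x))`. For
`y = x` and `x` replaced by `xᴴ` this reads `|J x|² = J (p |x|² + q |xᴴ|²) = J (a * a)` with
`a = p |x| + q |xᴴ|`. As `J` maps `s * s` to `(J s)ᴴ * J s` for self-adjoint `s`, `J a` is
positive, and uniqueness of positive square roots gives `|J x| = J a`.
-/

open Matrix ComplexOrder

/-- The absolute value `|A| = (Aᴴ A)^{1/2}` of a matrix. -/
noncomputable def matAbs {n : ℕ} (A : Matrix (Fin n) (Fin n) ℂ) :
    Matrix (Fin n) (Fin n) ℂ :=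
  (((Matrix.posSemidef_conjTranspose_mul_self A).1 : (Aᴴ * A).IsHermitian).eigenvectorUnitary :
      Matrix (Fin n) (Fin n) ℂ) *
    diagonal (((↑) : ℝ → ℂ) ∘ (√·) ∘ ((Matrix.posSemidef_conjTranspose_mul_self A).1 :
      (Aᴴ * A).IsHermitian).eigenvalues) *
    (star ((Matrix.posSemidef_conjTranspose_mul_self A).1 :
      (Aᴴ * A).IsHermitian).eigenvectorUnitary : Matrix (Fin n) (Fin n) ℂ)

namespace IsIdempotentElem

variable {R : Type*} [Ring R] {p : R}

theorem mul_mul_self_of_forall_commute (hp : IsIdempotentElem p) (hc : ∀ x, Commute p x)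
    (a : R) : p * a * p = p * a := by
  rw [mul_assoc, ← (hc a).eq, ← mul_assoc, hp.eq]

theorem mul_mul_mul_of_forall_commute (hp : IsIdempotentElem p) (hc : ∀ x, Commute p x)
    (a b : R) : p * a * (p * b) = p * (a * b) := by
  rw [← mul_assoc, hp.mul_mul_self_of_forall_commute hc, mul_assoc]

theorem mul_mul_one_sub_mul_of_forall_commute (hp : IsIdempotentElem p)
    (hc : ∀ x, Commute p x) (a b : R) : p * a * ((1 - p) * b) = 0 := by
  rw [← mul_assoc, mul_one_sub, hp.mul_mul_self_of_forall_commute hc, sub_self, zero_mul]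

theorem one_sub_mul_mul_mul_of_forall_commute (hp : IsIdempotentElem p)
    (hc : ∀ x, Commute p x) (a b : R) : (1 - p) * a * (p * b) = 0 := by
  rw [← mul_assoc, mul_assoc (1 - p), ← (hc a).eq, ← mul_assoc, hp.one_sub_mul_self,
    zero_mul, zero_mul]

theorem add_one_sub_mul_add_one_sub_of_forall_commute (hp : IsIdempotentElem p)
    (hc : ∀ x, Commute p x) (a b : R) :
    (p * a + (1 - p) * b) * (p * a + (1 - p) * b) = p * (a * a) + (1 - p) * (b * b) := by
  rw [add_mul, mul_add, mul_add, hp.mul_mul_mul_of_forall_commute hc,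
    hp.one_sub.mul_mul_mul_of_forall_commute fun x ↦ (Commute.one_left x).sub_left (hc x),
    hp.mul_mul_one_sub_mul_of_forall_commute hc, hp.one_sub_mul_mul_mul_of_forall_commute hc,
    add_zero, zero_add]

end IsIdempotentElem

section JordanHom

variable {R S F : Type*} [Ring R] [Ring S] [FunLike F R S] [AddMonoidHomClass F R S] {J : F}

theorem map_mul_add_mul_of_map_mul_self (hsq : ∀ x, J (x * x) = J x * J x) (a b : R) :
    J (a * b + b * a) = J a * J b + J b * J a :=
  calc J (a * b + b * a) = J ((a + b) * (a + b)) - J (a * a) - J (b * b) := by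
        rw [← map_sub, ← map_sub]; congr 1; noncomm_ring
    _ = J a * J b + J b * J a := by rw [hsq, hsq, hsq, map_add]; noncomm_ring

variable [IsAddTorsionFree S] {p : R}

theorem map_mul_map_one_sub_mul_eq_zero (hp : IsIdempotentElem p)
    (hsq : ∀ x, J (x * x) = J x * J x)
    (hhom : ∀ a b, J (p * (a * b)) = J (p * a) * J (p * b))
    (hanti : ∀ a b, J ((1 - p) * (a * b)) = J ((1 - p) * b) * J ((1 - p) * a)) (a b : R) :
    J (p * a) * J ((1 - p) * b) = 0 ∧ J ((1 - p) * b) * J (p * a) = 0 := by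
  have hJp : IsIdempotentElem (J p) := by rw [IsIdempotentElem, ← hsq, hp.eq]
  have hanticomm : J p * J (1 - p) + J (1 - p) * J p = 0 := by
    rw [← map_mul_add_mul_of_map_mul_self hsq, hp.mul_one_sub_self, hp.one_sub_mul_self,
      add_zero, map_zero]
  have hpq : J p * J (1 - p) = 0 := hJp.mul_eq_zero_of_anticommute hanticomm
  have hqp : J (1 - p) * J p = 0 := (hJp.commute_of_anticommute hanticomm).eq.symm.trans hpq
  have habsp (a : R) : J (p * a) = J (p * a) * J p := by simpa using hhom a 1
  have habsp' (a : R) : J (p * a) = J p * J (p * a) := by simpa using hhom 1 a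
  have habsq (b : R) : J ((1 - p) * b) = J (1 - p) * J ((1 - p) * b) := by simpa using hanti b 1
  have habsq' (b : R) : J ((1 - p) * b) = J ((1 - p) * b) * J (1 - p) := by simpa using hanti 1 b
  constructor
  · rw [habsp, habsq, mul_assoc, ← mul_assoc (J p), hpq, zero_mul, mul_zero]
  · rw [habsq', habsp', mul_assoc, ← mul_assoc (J (1 - p)), hqp, zero_mul, mul_zero]

theorem map_mul_map_eq_map_add (hp : IsIdempotentElem p) (hsq : ∀ x, J (x * x) = J x * J x)
    (hhom : ∀ a b, J (p * (a * b)) = J (p * a) * J (p * b))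
    (hanti : ∀ a b, J ((1 - p) * (a * b)) = J ((1 - p) * b) * J ((1 - p) * a)) (x y : R) :
    J x * J y = J (p * (x * y) + (1 - p) * (y * x)) := by
  have hdecomp (z : R) : J z = J (p * z) + J ((1 - p) * z) := by
    rw [← map_add, ← add_mul, add_sub_cancel, one_mul]
  obtain ⟨hxy, -⟩ := map_mul_map_one_sub_mul_eq_zero hp hsq hhom hanti x y
  obtain ⟨-, hyx⟩ := map_mul_map_one_sub_mul_eq_zero hp hsq hhom hanti y x
  rw [hdecomp x, hdecomp y, add_mul, mul_add, mul_add, hxy, hyx, ← hhom, ← hanti, map_add,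
    add_zero, zero_add]

end JordanHom

section MatrixAbs

open scoped MatrixOrder

theorem Matrix.PosSemidef.mul_of_isHermitian_of_isIdempotentElem {ι R : Type*} [Fintype ι]
    [Ring R] [PartialOrder R] [StarRing R] {A p : Matrix ι ι R} (hA : A.PosSemidef) (hpH : pᴴ = p)
    (hp : IsIdempotentElem p) (hc : Commute p A) : (p * A).PosSemidef := by
  have h := hA.conjTranspose_mul_mul_same p
  rwa [hpH, mul_assoc, ← hc.eq, ← mul_assoc, hp.eq] at h

theorem Matrix.PosSemidef.map_of_map_mul_self {ι κ 𝕜 F : Type*} [Fintype ι] [DecidableEq ι]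
    [Fintype κ] [RCLike 𝕜] [FunLike F (Matrix ι ι 𝕜) (Matrix κ κ 𝕜)] {J : F}
    (hstar : ∀ x, J xᴴ = (J x)ᴴ) (hsq : ∀ x, J (x * x) = J x * J x) {a : Matrix ι ι 𝕜}
    (ha : a.PosSemidef) : (J a).PosSemidef := by
  have hs : (J (CFC.sqrt a))ᴴ = J (CFC.sqrt a) := by
    rw [← hstar]
    exact congrArg J (CFC.sqrt_nonneg a).isSelfAdjoint
  rw [← CFC.sqrt_mul_sqrt_self a ha.nonneg, hsq]
  nth_rw 1 [← hs]
  exact posSemidef_conjTranspose_mul_self _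

variable {n : ℕ}

theorem matAbs_eq_sqrt (A : Matrix (Fin n) (Fin n) ℂ) : matAbs A = CFC.sqrt (Aᴴ * A) := by
  rw [CFC.sqrt_eq_real_sqrt _ (posSemidef_conjTranspose_mul_self A).nonneg, cfcₙ_eq_cfc,
    IsHermitian.cfc_eq (posSemidef_conjTranspose_mul_self A).1]
  rfl

theorem posSemidef_matAbs (A : Matrix (Fin n) (Fin n) ℂ) : (matAbs A).PosSemidef := by
  rw [matAbs_eq_sqrt]
  exact (CFC.sqrt_nonneg _).posSemidef

theorem matAbs_mul_self (A : Matrix (Fin n) (Fin n) ℂ) : matAbs A * matAbs A = Aᴴ * A := by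
  rw [matAbs_eq_sqrt]
  exact CFC.sqrt_mul_sqrt_self _ (posSemidef_conjTranspose_mul_self A).nonneg

theorem eq_matAbs_of_mul_self_eq {A B : Matrix (Fin n) (Fin n) ℂ} (hB : B.PosSemidef)
    (h : B * B = Aᴴ * A) : B = matAbs A := by
  rw [matAbs_eq_sqrt]
  exact (CFC.sqrt_unique h hB.nonneg).symm

end MatrixAbs

theorem stmt_12_general {n m : ℕ}
    (J : Matrix (Fin n) (Fin n) ℂ →ₗ[ℂ] Matrix (Fin m) (Fin m) ℂ)
    (hstar : ∀ x, J xᴴ = (J x)ᴴ)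
    (hsq : ∀ x, J (x * x) = J x * J x)
    (p : Matrix (Fin n) (Fin n) ℂ)
    (hp : p * p = p) (hpH : pᴴ = p) (hcentral : ∀ x, p * x = x * p)
    (hhom : ∀ x y, J ((p * x * p) * (p * y * p)) = J (p * x * p) * J (p * y * p))
    (hanti : ∀ x y, J (((1 - p) * x * (1 - p)) * ((1 - p) * y * (1 - p))) =
      J ((1 - p) * y * (1 - p)) * J ((1 - p) * x * (1 - p))) :
    ∀ x, matAbs (J x) = J (p * matAbs x + (1 - p) * matAbs xᴴ) := by
  intro x
  have : IsAddTorsionFree (Matrix (Fin m) (Fin m) ℂ) := .of_module_rat _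
  have hp : IsIdempotentElem p := hp
  have hc : ∀ y, Commute p y := hcentral
  have hq : IsIdempotentElem (1 - p) := hp.one_sub
  have hqc (y) : Commute (1 - p) y := (Commute.one_left y).sub_left (hc y)
  have hhom' (a b) : J (p * (a * b)) = J (p * a) * J (p * b) := by
    simpa only [hp.mul_mul_self_of_forall_commute hc, hp.mul_mul_mul_of_forall_commute hc]
      using hhom a b
  have hanti' (a b) : J ((1 - p) * (a * b)) = J ((1 - p) * b) * J ((1 - p) * a) := by
    simpa only [hq.mul_mul_self_of_forall_commute hqc, hq.mul_mul_mul_of_forall_commute hqc]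
      using hanti a b
  refine (eq_matAbs_of_mul_self_eq ?_ ?_).symm
  · refine PosSemidef.map_of_map_mul_self hstar hsq (PosSemidef.add ?_ ?_)
    · exact (posSemidef_matAbs x).mul_of_isHermitian_of_isIdempotentElem hpH hp (hc _)
    · exact (posSemidef_matAbs xᴴ).mul_of_isHermitian_of_isIdempotentElem
        (by rw [conjTranspose_sub, conjTranspose_one, hpH]) hq (hqc _)
  · rw [← hsq, hp.add_one_sub_mul_add_one_sub_of_forall_commute hc, matAbs_mul_self,
      matAbs_mul_self, conjTranspose_conjTranspose, ← hstar,
      map_mul_map_eq_map_add hp hsq hhom' hanti']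

/-- If `J` is an injective Jordan *-homomorphism which is a *-homomorphism on
`pM₁p` and a *-anti-homomorphism on `(1−p)M₁(1−p)` for a central projection `p`,
then `|J(x)| = J(p|x| + (1−p)|x*|)` for every `x`. -/
theorem stmt_12 {n m : ℕ}
    (J : Matrix (Fin n) (Fin n) ℂ →ₗ[ℂ] Matrix (Fin m) (Fin m) ℂ)
    (hstar : ∀ x, J xᴴ = (J x)ᴴ)
    (hsq : ∀ x, J (x * x) = J x * J x)
    (hinj : Function.Injective J)
    (p : Matrix (Fin n) (Fin n) ℂ)
    (hp : p * p = p) (hpH : pᴴ = p) (hcentral : ∀ x, p * x = x * p)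
    (hhom : ∀ x y, J ((p * x * p) * (p * y * p)) = J (p * x * p) * J (p * y * p))
    (hanti : ∀ x y, J (((1 - p) * x * (1 - p)) * ((1 - p) * y * (1 - p))) =
      J ((1 - p) * y * (1 - p)) * J ((1 - p) * x * (1 - p))) :
    ∀ x, matAbs (J x) = J (p * matAbs x + (1 - p) * matAbs xᴴ) :=
  stmt_12_general J hstar hsq p hp hpH hcentral hhom hanti
end

section
/- Let φ : Mₙ(ℂ) → Mₘ(ℂ) be a linear map, continuous in the operator norm, whose restriction to projections is an ortho-homomorphism: φ(p) is a projection for every projection p, and for orthogonal projections p ⊥ q one has φ(p) ⊥ φ(q) and φ(p+q) = φ(p) + φ(q). Then φ is a Jordan *-homomorphism. -/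
/-!
A Hermitian matrix is a real combination `∑ cⱼ Qⱼ` of pairwise orthogonal spectral projections,
so that `x² = ∑ cⱼ² Qⱼ`. The images `φ Qⱼ` are again pairwise orthogonal projections, hence
`φ x = ∑ cⱼ φ Qⱼ` is self-adjoint and `φ (x²) = (φ x)²`. Writing an arbitrary `x` as `a + i b`
with `a`, `b` self-adjoint, and polarizing `φ ((a + b)²) = (φ (a + b))²`, extends both identities
to all `x`.
-/

open Matrix Complex ComplexStarModule

structure IsOrthogonalStarProjections {ι R : Type*} [Mul R] [Zero R] [Star R] (Q : ι → R) :
    Prop where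
  isStarProjection : ∀ j, IsStarProjection (Q j)
  mul_eq_zero : Pairwise fun j k => Q j * Q k = 0

namespace IsOrthogonalStarProjections

variable {ι R S : Type*}

theorem mul_eq_ite [MulZeroClass R] [Star R] [DecidableEq ι] {Q : ι → R}
    (hQ : IsOrthogonalStarProjections Q) (j k : ι) :
    Q j * Q k = if j = k then Q j else 0 := by
  split_ifs with h
  · exact h ▸ (hQ.isStarProjection j).isIdempotentElem
  · exact hQ.mul_eq_zero h

theorem comp [MulZeroClass R] [Star R] [MulZeroClass S] [Star S] {Q : ι → R}
    (hQ : IsOrthogonalStarProjections Q) (f : R → S)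
    (hproj : ∀ p, IsStarProjection p → IsStarProjection (f p))
    (horth : ∀ p q, IsStarProjection p → IsStarProjection q → p * q = 0 → f p * f q = 0) :
    IsOrthogonalStarProjections (f ∘ Q) where
  isStarProjection j := hproj _ (hQ.isStarProjection j)
  mul_eq_zero _ _ h :=
    horth _ _ (hQ.isStarProjection _) (hQ.isStarProjection _) (hQ.mul_eq_zero h)

theorem sum_smul_mul_sum_smul [Fintype ι] {K : Type*} [CommSemiring K] [Semiring R] [Star R]
    [Algebra K R] {Q : ι → R} (hQ : IsOrthogonalStarProjections Q) (c d : ι → K) :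
    (∑ j, c j • Q j) * (∑ j, d j • Q j) = ∑ j, (c j * d j) • Q j := by
  classical
  simp [Finset.sum_mul_sum, hQ.mul_eq_ite, smul_smul, mul_comm]

theorem isSelfAdjoint_sum_smul [Fintype ι] {𝕜 : Type*} [RCLike 𝕜] [Semiring R] [StarRing R]
    [Module 𝕜 R] [StarModule 𝕜 R] {Q : ι → R} (hQ : IsOrthogonalStarProjections Q)
    (c : ι → ℝ) : IsSelfAdjoint (∑ j, (c j : 𝕜) • Q j) :=
  isSelfAdjoint_sum _ fun j _ =>
    IsSelfAdjoint.smul (RCLike.conj_ofReal _) (hQ.isStarProjection j).isSelfAdjoint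

end IsOrthogonalStarProjections

theorem Matrix.isOrthogonalStarProjections_single (ι α : Type*) [DecidableEq ι] [Fintype ι]
    [Semiring α] [StarRing α] :
    IsOrthogonalStarProjections fun j : ι => single j j (1 : α) where
  isStarProjection j :=
    ⟨by simp [IsIdempotentElem], by simp [IsSelfAdjoint, star_eq_conjTranspose]⟩
  mul_eq_zero _ _ h := single_mul_single_of_ne _ _ _ _ h _

theorem Matrix.IsHermitian.exists_eq_sum_smul {ι 𝕜 : Type*} [DecidableEq ι] [Fintype ι]
    [RCLike 𝕜] {x : Matrix ι ι 𝕜} (hx : x.IsHermitian) :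
    ∃ (c : ι → ℝ) (Q : ι → Matrix ι ι 𝕜),
      IsOrthogonalStarProjections Q ∧ x = ∑ j, (c j : 𝕜) • Q j := by
  set f := Unitary.conjStarAlgAut 𝕜 _ hx.eigenvectorUnitary
  refine ⟨hx.eigenvalues, f ∘ fun j => single j j 1,
    (isOrthogonalStarProjections_single ι 𝕜).comp f (fun p hp => hp.map f) ?_, ?_⟩
  · intro p q _ _ h
    rw [← map_mul, h, map_zero]
  · conv_lhs => rw [hx.spectral_theorem, ← sum_single_eq_diagonal]
    simp only [map_sum, Function.comp_apply, ← map_smul, smul_single, smul_eq_mul, mul_one]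
    rfl

theorem LinearMap.isSelfAdjoint_map_and_map_mul_self_of_isHermitian {ι 𝕜 B : Type*}
    [DecidableEq ι] [Fintype ι] [RCLike 𝕜] [Semiring B] [StarRing B] [Algebra 𝕜 B]
    [StarModule 𝕜 B] (φ : Matrix ι ι 𝕜 →ₗ[𝕜] B)
    (hproj : ∀ p, IsStarProjection p → IsStarProjection (φ p))
    (horth : ∀ p q, IsStarProjection p → IsStarProjection q → p * q = 0 → φ p * φ q = 0)
    {x : Matrix ι ι 𝕜} (hx : x.IsHermitian) :
    IsSelfAdjoint (φ x) ∧ φ (x * x) = φ x * φ x := by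
  obtain ⟨c, Q, hQ, rfl⟩ := hx.exists_eq_sum_smul
  have hφQ := hQ.comp φ hproj horth
  simp only [hQ.sum_smul_mul_sum_smul, map_sum, map_smul]
  exact ⟨hφQ.isSelfAdjoint_sum_smul c, (hφQ.sum_smul_mul_sum_smul _ _).symm⟩

section Jordan

variable {A B : Type*} [Ring A] [StarRing A] [Algebra ℂ A] [Ring B] [Algebra ℂ B]

theorem exists_isSelfAdjoint_eq_add_I_smul [StarModule ℂ A] (x : A) :
    ∃ a b : A, IsSelfAdjoint a ∧ IsSelfAdjoint b ∧ x = a + I • b :=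
  ⟨ℜ x, ℑ x, (ℜ x).2, (ℑ x).2, (realPart_add_I_smul_imaginaryPart x).symm⟩

theorem add_I_smul_mul_self {R : Type*} [Ring R] [Algebra ℂ R] (a b : R) :
    (a + I • b) * (a + I • b) = a * a - b * b + I • (a * b + b * a) := by
  simp only [add_mul, mul_add, smul_mul_assoc, mul_smul_comm, smul_smul, I_mul_I, neg_smul,
    one_smul, smul_add]
  abel

theorem LinearMap.map_star_of_isSelfAdjoint [StarModule ℂ A] [StarRing B] [StarModule ℂ B]
    (φ : A →ₗ[ℂ] B) (h : ∀ a, IsSelfAdjoint a → IsSelfAdjoint (φ a)) (x : A) :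
    φ (star x) = star (φ x) := by
  obtain ⟨a, b, ha, hb, rfl⟩ := exists_isSelfAdjoint_eq_add_I_smul x
  simp [ha.star_eq, hb.star_eq, (h a ha).star_eq, (h b hb).star_eq]

theorem LinearMap.map_mul_add_mul_of_isSelfAdjoint (φ : A →ₗ[ℂ] B)
    (h : ∀ a, IsSelfAdjoint a → φ (a * a) = φ a * φ a) {a b : A}
    (ha : IsSelfAdjoint a) (hb : IsSelfAdjoint b) :
    φ (a * b + b * a) = φ a * φ b + φ b * φ a := by
  have hab := h (a + b) (ha.add hb)
  simp only [add_mul, mul_add, map_add, h a ha, h b hb] at hab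
  rw [map_add]
  grind

theorem LinearMap.map_mul_self_of_isSelfAdjoint [StarModule ℂ A] (φ : A →ₗ[ℂ] B)
    (h : ∀ a, IsSelfAdjoint a → φ (a * a) = φ a * φ a) (x : A) :
    φ (x * x) = φ x * φ x := by
  obtain ⟨a, b, ha, hb, rfl⟩ := exists_isSelfAdjoint_eq_add_I_smul x
  rw [map_add, map_smul, add_I_smul_mul_self, add_I_smul_mul_self, map_add, map_smul, map_sub,
    h a ha, h b hb, φ.map_mul_add_mul_of_isSelfAdjoint h ha hb]

end Jordan

theorem stmt_13_general {n m : ℕ}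
    (φ : Matrix (Fin n) (Fin n) ℂ →ₗ[ℂ] Matrix (Fin m) (Fin m) ℂ)
    (hproj : ∀ p : Matrix (Fin n) (Fin n) ℂ, p * p = p → pᴴ = p →
      φ p * φ p = φ p ∧ (φ p)ᴴ = φ p)
    (horth : ∀ p q : Matrix (Fin n) (Fin n) ℂ, p * p = p → pᴴ = p →
      q * q = q → qᴴ = q → p * q = 0 →
      φ p * φ q = 0 ∧ φ (p + q) = φ p + φ q) :
    (∀ x, φ xᴴ = (φ x)ᴴ) ∧ (∀ x, φ (x * x) = φ x * φ x) := by
  have hherm (x : Matrix (Fin n) (Fin n) ℂ) (hx : IsSelfAdjoint x) :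
      IsSelfAdjoint (φ x) ∧ φ (x * x) = φ x * φ x :=
    φ.isSelfAdjoint_map_and_map_mul_self_of_isHermitian
      (fun p hp => ⟨(hproj p hp.1 hp.2).1, (hproj p hp.1 hp.2).2⟩)
      (fun p q hp hq hpq => (horth p q hp.1 hp.2 hq.1 hq.2 hpq).1) hx
  exact ⟨φ.map_star_of_isSelfAdjoint fun a ha => (hherm a ha).1,
    φ.map_mul_self_of_isSelfAdjoint fun a ha => (hherm a ha).2⟩

/-- A norm-continuous linear map on a matrix algebra whose restriction to
projections is an ortho-homomorphism is a Jordan *-homomorphism. -/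
theorem stmt_13 {n m : ℕ}
    (φ : Matrix (Fin n) (Fin n) ℂ →ₗ[ℂ] Matrix (Fin m) (Fin m) ℂ)
    (hcont : Continuous fun x => φ x)
    (hproj : ∀ p : Matrix (Fin n) (Fin n) ℂ, p * p = p → pᴴ = p →
      φ p * φ p = φ p ∧ (φ p)ᴴ = φ p)
    (horth : ∀ p q : Matrix (Fin n) (Fin n) ℂ, p * p = p → pᴴ = p →
      q * q = q → qᴴ = q → p * q = 0 →
      φ p * φ q = 0 ∧ φ (p + q) = φ p + φ q) :
    (∀ x, φ xᴴ = (φ x)ᴴ) ∧ (∀ x, φ (x * x) = φ x * φ x) :=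
  stmt_13_general φ hproj horth
end

section
/- Let (xᵢ)ᵢ be a net in a von Neumann algebra M, uniformly bounded in operator norm, and (pᵢ)ᵢ an increasing net of projections with pᵢ ↑ 1. Suppose xᵢ = pᵢ xⱼ pᵢ for all j ≥ i. Then (xᵢ) converges in the strong operator topology to some x ∈ M, and xᵢ = pᵢ x pᵢ for every i. -/
/-!
For `i ≤ j` the compatibility condition gives `⟪xᵢ v, u⟫ = ⟪xⱼ (pᵢ v), pᵢ u⟫`, which differs from
`⟪xⱼ v, u⟫` by at most `C (‖v - pᵢ v‖ ‖u‖ + ‖pᵢ v‖ ‖u - pᵢ u‖) → 0`. Hence every matrix coefficient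
of the bounded net `(xᵢ)` is Cauchy, and by the Riesz representation theorem the net converges in
the weak operator topology to some `y`. Multiplication is separately WOT-continuous, so commutants
are WOT-closed: this gives `y ∈ M'' = M`, and compressing the limit gives `xᵢ = pᵢ y pᵢ`. Finally
`xᵢ v = pᵢ (y (pᵢ v)) → y v` because `‖pᵢ‖ ≤ 1`, which upgrades weak to strong convergence.
-/

open Filter Topology
open scoped InnerProductSpace

theorem cauchySeq_of_dist_le_of_tendsto_zero {α β : Type*} [PseudoMetricSpace α] [Preorder β]
    [IsDirectedOrder β] [Nonempty β] {s : β → α} (b : β → ℝ)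
    (h : ∀ n m, n ≤ m → dist (s n) (s m) ≤ b n) (h₀ : Tendsto b atTop (𝓝 0)) : CauchySeq s := by
  refine Metric.cauchy_iff.2 ⟨map_neBot, fun ε hε => ?_⟩
  obtain ⟨N, hN⟩ := (h₀.eventually (gt_mem_nhds (half_pos hε))).exists
  refine ⟨s '' Set.Ici N, image_mem_map (Ici_mem_atTop N), ?_⟩
  rintro _ ⟨n, hn, rfl⟩ _ ⟨m, hm, rfl⟩
  calc dist (s n) (s m) ≤ dist (s N) (s n) + dist (s N) (s m) := dist_triangle_left _ _ _
    _ < ε := by linarith [h N n hn, h N m hm]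

theorem tendsto_apply_of_tendsto_of_norm_le {𝕜 E F α : Type*} [NontriviallyNormedField 𝕜]
    [SeminormedAddCommGroup E] [SeminormedAddCommGroup F] [NormedSpace 𝕜 E] [NormedSpace 𝕜 F]
    {l : Filter α} {T : α → E →L[𝕜] F} {K : ℝ} (hT : ∀ a, ‖T a‖ ≤ K) {w : α → E} {w₀ : E}
    (hw : Tendsto w l (𝓝 w₀)) {s : F} (hs : Tendsto (fun a => T a w₀) l (𝓝 s)) :
    Tendsto (fun a => T a (w a)) l (𝓝 s) := by
  have hsmall : Tendsto (fun a => T a (w a - w₀)) l (𝓝 0) :=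
    squeeze_zero_norm (fun a => (T a).le_of_opNorm_le (hT a) _)
      (by simpa using (hw.sub_const w₀).norm.const_mul K)
  simpa using hsmall.add hs

theorem norm_inner_apply_sub_inner_apply_le {𝕜 E : Type*} [RCLike 𝕜] [NormedAddCommGroup E]
    [InnerProductSpace 𝕜 E] (T : E →L[𝕜] E) (v v' u u' : E) :
    ‖⟪T v, u⟫_𝕜 - ⟪T v', u'⟫_𝕜‖ ≤ ‖T‖ * (‖v - v'‖ * ‖u‖ + ‖v'‖ * ‖u - u'‖) := by
  have hsplit : ⟪T v, u⟫_𝕜 - ⟪T v', u'⟫_𝕜 = ⟪T (v - v'), u⟫_𝕜 + ⟪T v', u - u'⟫_𝕜 := by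
    rw [map_sub, inner_sub_left, inner_sub_right]; ring
  rw [hsplit]
  calc ‖⟪T (v - v'), u⟫_𝕜 + ⟪T v', u - u'⟫_𝕜‖
      ≤ ‖T (v - v')‖ * ‖u‖ + ‖T v'‖ * ‖u - u'‖ :=
        (norm_add_le _ _).trans (add_le_add (norm_inner_le_norm _ _) (norm_inner_le_norm _ _))
    _ ≤ ‖T‖ * ‖v - v'‖ * ‖u‖ + ‖T‖ * ‖v'‖ * ‖u - u'‖ := by gcongr <;> exact T.le_opNorm _
    _ = ‖T‖ * (‖v - v'‖ * ‖u‖ + ‖v'‖ * ‖u - u'‖) := by ring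

namespace ContinuousLinearMapWOT

variable {𝕜 E : Type*} [NormedField 𝕜] [AddCommGroup E] [TopologicalSpace E] [Module 𝕜 E]
  [IsTopologicalAddGroup E] [ContinuousConstSMul 𝕜 E]

instance instSeparatelyContinuousMul : SeparatelyContinuousMul (E →WOT[𝕜] E) where
  continuous_const_mul := continuous_postcomp _
  continuous_mul_const := continuous_precomp _

theorem isClosed_preimage_toCLM_centralizer [SeparatingDual 𝕜 E] (S : Set (E →L[𝕜] E)) :
    IsClosed (toCLM ⁻¹' Set.centralizer S) := by
  convert Set.isClosed_centralizer (ofCLM '' S) using 1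
  ext A
  simp only [Set.mem_preimage, Set.mem_centralizer_iff, Set.forall_mem_image,
    ← toCLM_injective.eq_iff, toCLM_mul]

end ContinuousLinearMapWOT

section WeakLimit

variable {𝕜 E α : Type*} [RCLike 𝕜] [NormedAddCommGroup E] [InnerProductSpace 𝕜 E]
  [CompleteSpace E] {l : Filter α} [l.NeBot]

theorem exists_norm_le_forall_tendsto_inner {w : α → E} {K : ℝ} (hw : ∀ a, ‖w a‖ ≤ K)
    (h : ∀ u, ∃ c, Tendsto (fun a => ⟪w a, u⟫_𝕜) l (𝓝 c)) :
    ∃ z, ‖z‖ ≤ K ∧ ∀ u, Tendsto (fun a => ⟪w a, u⟫_𝕜) l (𝓝 ⟪z, u⟫_𝕜) := by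
  choose c hc using h
  have hbdd : Bornology.IsBounded (Set.range fun a => innerSL 𝕜 (w a)) :=
    isBounded_iff_forall_norm_le.2 ⟨K, by rintro _ ⟨a, rfl⟩; simpa using hw a⟩
  let φ := ContinuousLinearMap.ofTendstoOfBoundedRange c _ (tendsto_pi_nhds.2 hc) hbdd
  have hK : 0 ≤ K := (norm_nonneg _).trans (hw (l.nonempty_of_neBot).some)
  refine ⟨(InnerProductSpace.toDual 𝕜 E).symm φ, ?_, fun u => ?_⟩
  · rw [LinearIsometryEquiv.norm_map]
    refine φ.opNorm_le_bound hK fun u => le_of_tendsto (hc u).norm (.of_forall fun a => ?_)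
    exact (norm_inner_le_norm _ _).trans (mul_le_mul_of_nonneg_right (hw a) (norm_nonneg u))
  · rw [InnerProductSpace.toDual_symm_apply]
    exact hc u

theorem ContinuousLinearMapWOT.exists_tendsto_ofCLM_of_norm_le {T : α → E →L[𝕜] E} {C : ℝ}
    (hT : ∀ a, ‖T a‖ ≤ C)
    (h : ∀ v u, ∃ c, Tendsto (fun a => ⟪T a v, u⟫_𝕜) l (𝓝 c)) :
    ∃ A : E →L[𝕜] E, Tendsto (fun a => ofCLM (T a)) l (𝓝 (ofCLM A)) := by
  choose z hz_norm hz using fun v =>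
    exists_norm_le_forall_tendsto_inner (fun a => (T a).le_of_opNorm_le (hT a) v) (h v)
  have hz_add : ∀ v v', z (v + v') = z v + z v' := fun v v' => ext_inner_right 𝕜 fun u =>
    tendsto_nhds_unique (hz (v + v') u)
      (by simpa only [map_add, inner_add_left] using (hz v u).add (hz v' u))
  have hz_smul : ∀ (c : 𝕜) v, z (c • v) = c • z v := fun c v => ext_inner_right 𝕜 fun u =>
    tendsto_nhds_unique (hz (c • v) u)
      (by simpa only [map_smul, inner_smul_left] using (hz v u).const_mul (starRingEnd 𝕜 c))
  refine ⟨LinearMap.mkContinuous ⟨⟨z, hz_add⟩, hz_smul⟩ C hz_norm,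
    tendsto_iff_forall_inner_apply_tendsto.2 fun v u => ?_⟩
  have hzvu := (hz v u).star
  simp only [RCLike.star_def, inner_conj_symm] at hzvu
  exact hzvu

end WeakLimit

theorem VonNeumannAlgebra.isClosed_preimage_toCLM {H : Type*} [NormedAddCommGroup H]
    [InnerProductSpace ℂ H] [CompleteSpace H] (M : VonNeumannAlgebra H) :
    IsClosed (ContinuousLinearMapWOT.toCLM ⁻¹' (M : Set (H →L[ℂ] H))) :=
  M.centralizer_centralizer ▸ ContinuousLinearMapWOT.isClosed_preimage_toCLM_centralizer _

section Compression

variable {𝕜 E ι : Type*} [RCLike 𝕜] [NormedAddCommGroup E] [InnerProductSpace 𝕜 E]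
  [Preorder ι] {x p : ι → E →L[𝕜] E}

theorem inner_apply_eq_inner_compression [CompleteSpace E] (hp : ∀ i, IsStarProjection (p i))
    (hcompat : ∀ i j, i ≤ j → x i = p i * x j * p i) {i j : ι} (hij : i ≤ j) (v u : E) :
    ⟪x i v, u⟫_𝕜 = ⟪x j (p i v), p i u⟫_𝕜 := by
  rw [hcompat i j hij]
  exact (hp i).isSelfAdjoint.isSymmetric _ _

theorem cauchySeq_inner_apply_of_compat [CompleteSpace E] [Nonempty ι] [IsDirectedOrder ι]
    {C : ℝ} (hbound : ∀ i, ‖x i‖ ≤ C) (hp : ∀ i, IsStarProjection (p i))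
    (hlim : ∀ v, Tendsto (fun i => p i v) atTop (𝓝 v))
    (hcompat : ∀ i j, i ≤ j → x i = p i * x j * p i) (v u : E) :
    CauchySeq fun j => ⟪x j v, u⟫_𝕜 := by
  refine cauchySeq_of_dist_le_of_tendsto_zero
    (fun i => C * (‖v - p i v‖ * ‖u‖ + ‖p i v‖ * ‖u - p i u‖)) (fun i j hij => ?_) ?_
  · rw [dist_comm, dist_eq_norm, inner_apply_eq_inner_compression hp hcompat hij]
    exact (norm_inner_apply_sub_inner_apply_le _ _ _ _ _).trans
      (mul_le_mul_of_nonneg_right (hbound j) (by positivity))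
  · have hv := (tendsto_const_nhds (x := v)).sub (hlim v)
    have hu := (tendsto_const_nhds (x := u)).sub (hlim u)
    simpa using tendsto_const_nhds (x := C) |>.mul
      ((hv.norm.mul_const ‖u‖).add ((hlim v).norm.mul hu.norm))

theorem eq_compression_of_tendsto_ofCLM [Nonempty ι] [IsDirectedOrder ι]
    (hcompat : ∀ i j, i ≤ j → x i = p i * x j * p i) {y : E →L[𝕜] E}
    (hy : Tendsto (fun j => ContinuousLinearMapWOT.ofCLM (x j)) atTop
      (𝓝 (ContinuousLinearMapWOT.ofCLM y))) (i : ι) :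
    x i = p i * y * p i := by
  apply ContinuousLinearMapWOT.ofCLM_injective
  refine tendsto_nhds_unique (tendsto_const_nhds.congr' ?_)
    (((continuous_mul_const _).comp (continuous_const_mul _)).tendsto _ |>.comp hy)
  filter_upwards [Ici_mem_atTop i] with j hj
  rw [hcompat i j hj]
  rfl

end Compression

theorem stmt_14_general {H : Type*} [NormedAddCommGroup H] [InnerProductSpace ℂ H]
    [CompleteSpace H] (M : VonNeumannAlgebra H)
    {ι : Type*} [Preorder ι] [Nonempty ι] [IsDirected ι (· ≤ ·)]
    (x p : ι → H →L[ℂ] H) (C : ℝ)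
    (hbound : ∀ i, ‖x i‖ ≤ C)
    (hxM : ∀ i, x i ∈ M)
    (hproj : ∀ i, IsIdempotentElem (p i) ∧ IsSelfAdjoint (p i))
    (hlim : ∀ v : H, Tendsto (fun i => p i v) atTop (nhds v))
    (hcompat : ∀ i j, i ≤ j → x i = p i * x j * p i) :
    ∃ y : H →L[ℂ] H, y ∈ M ∧
      (∀ v : H, Tendsto (fun i => x i v) atTop (nhds (y v))) ∧
      ∀ i, x i = p i * y * p i := by
  have hp : ∀ i, IsStarProjection (p i) := fun i => ⟨(hproj i).1, (hproj i).2⟩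
  obtain ⟨y, hy⟩ := ContinuousLinearMapWOT.exists_tendsto_ofCLM_of_norm_le hbound fun v u =>
    cauchySeq_tendsto_of_complete (cauchySeq_inner_apply_of_compat hbound hp hlim hcompat v u)
  have hxy : ∀ i, x i = p i * y * p i := eq_compression_of_tendsto_ofCLM hcompat hy
  refine ⟨y, M.isClosed_preimage_toCLM.mem_of_tendsto hy (.of_forall hxM), fun v => ?_, hxy⟩
  simpa only [hxy, mul_apply_eq_comp, Function.comp_apply] using
    tendsto_apply_of_tendsto_of_norm_le (fun i => IsStarProjection.norm_le _ (hp i))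
      ((y.continuous.tendsto v).comp (hlim v)) (hlim (y v))

/-- A uniformly bounded net `(xᵢ)` in a von Neumann algebra compatible with an
increasing net of projections `pᵢ ↑ 1` (in the sense `xᵢ = pᵢ xⱼ pᵢ` for `j ≥ i`)
converges strongly to some `x ∈ M` with `xᵢ = pᵢ x pᵢ`. -/
theorem stmt_14 {H : Type*} [NormedAddCommGroup H] [InnerProductSpace ℂ H]
    [CompleteSpace H] (M : VonNeumannAlgebra H)
    {ι : Type*} [Preorder ι] [Nonempty ι] [IsDirected ι (· ≤ ·)]
    (x p : ι → H →L[ℂ] H) (C : ℝ)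
    (hbound : ∀ i, ‖x i‖ ≤ C)
    (hxM : ∀ i, x i ∈ M) (hpM : ∀ i, p i ∈ M)
    (hproj : ∀ i, IsIdempotentElem (p i) ∧ IsSelfAdjoint (p i))
    (hmono : ∀ i j, i ≤ j → p j * p i = p i ∧ p i * p j = p i)
    (hlim : ∀ v : H, Tendsto (fun i => p i v) atTop (nhds v))
    (hcompat : ∀ i j, i ≤ j → x i = p i * x j * p i) :
    ∃ y : H →L[ℂ] H, y ∈ M ∧
      (∀ v : H, Tendsto (fun i => x i v) atTop (nhds (y v))) ∧
      ∀ i, x i = p i * y * p i :=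
  stmt_14_general M x p C hbound hxM hproj hlim hcompat
end
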